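/- Let ν₁(ρ,δ,γ) = -2[ρ²cos γ - sin γ·(δ + (1 + 1/(1+4δ²))·z)] and ν₂(ρ,δ,γ) = -2z, where z = γ + (1/2)arctan(2δ). Then for (ρ,δ,γ) with ρ > 0, if ν₁(ρ,δ,γ) = 0 and ν₂(ρ,δ,γ) = 0 then ρ = 0, a contradiction; i.e., (ν₁,ν₂) never simultaneously vanishes on {ρ > 0} × ℝ². -/

import Mathlib

/-! On `z = 0` we have `γ = -arctan (2δ) / 2 ∈ (-π/4, π/4)`, so `cos γ > 0` and `sin γ` has the
sign opposite to `δ`. There `ν₁ = -2 (ρ² cos γ - δ sin γ)` is a sum of a negative and a nonpositive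
term, so it cannot vanish when `ρ ≠ 0`. -/

noncomputable def z (δ γ : ℝ) : ℝ := γ + (1 / 2) * Real.arctan (2 * δ)

noncomputable def ν₁ (ρ δ γ : ℝ) : ℝ :=
  -2 * (ρ ^ 2 * Real.cos γ -
    Real.sin γ * (δ + (1 + 1 / (1 + 4 * δ ^ 2)) * z δ γ))

noncomputable def ν₂ (ρ δ γ : ℝ) : ℝ := -2 * z δ γ

open Real

lemma cos_half_arctan_pos (x : ℝ) : 0 < cos (arctan x / 2) := by
  obtain ⟨hlo, hhi⟩ := arctan_mem_Ioo x
  apply cos_pos_of_mem_Ioo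
  constructor <;> linarith [pi_pos]

lemma mul_sin_half_arctan_nonneg (x : ℝ) : 0 ≤ x * sin (arctan x / 2) := by
  obtain ⟨hlo, hhi⟩ := arctan_mem_Ioo x
  rcases le_total 0 x with hx | hx
  · have : 0 ≤ sin (arctan x / 2) :=
      sin_nonneg_of_nonneg_of_le_pi (by linarith [arctan_nonneg.mpr hx]) (by linarith [pi_pos])
    positivity
  · have : sin (arctan x / 2) ≤ 0 :=
      sin_nonpos_of_nonpos_of_neg_pi_le (by linarith [arctan_le_zero.mpr hx]) (by linarith [pi_pos])
    exact mul_nonneg_of_nonpos_of_nonpos hx this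

lemma eq_neg_half_arctan_of_z_eq_zero {δ γ : ℝ} (hz : z δ γ = 0) :
    γ = -(arctan (2 * δ) / 2) := by
  unfold z at hz
  linarith

lemma ν₁_neg_of_z_eq_zero {ρ δ γ : ℝ} (hρ : ρ ≠ 0) (hz : z δ γ = 0) : ν₁ ρ δ γ < 0 := by
  have hcos : 0 < cos γ := by
    rw [eq_neg_half_arctan_of_z_eq_zero hz, cos_neg]
    exact cos_half_arctan_pos _
  have hsin : 0 ≤ -(2 * δ * sin γ) := by
    rw [eq_neg_half_arctan_of_z_eq_zero hz, sin_neg, mul_neg, neg_neg]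
    exact mul_sin_half_arctan_nonneg _
  have hρ2 : 0 < ρ ^ 2 := by positivity
  unfold ν₁
  rw [hz]
  linarith [mul_pos hρ2 hcos]

theorem LgV_never_vanishes :
    ∀ ρ δ γ : ℝ, 0 < ρ → ¬(ν₁ ρ δ γ = 0 ∧ ν₂ ρ δ γ = 0) := by
  rintro ρ δ γ hρ ⟨hν₁, hν₂⟩
  have hz : z δ γ = 0 := by
    unfold ν₂ at hν₂
    linarith
  exact (ν₁_neg_of_z_eq_zero hρ.ne' hz).ne hν₁
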